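/- (Classification of enhanced complexes, matrix form.) Let F be a field, let n ≥ 1 and let m_0, m_1, …, m_n be nonnegative integers. For each k ∈ {1, …, n} let D_k be an m_{k−1} × m_k matrix over F, and suppose that D_k · D_{k+1} = 0 for all k ∈ {1, …, n−1}. Then there exist unitriangular matrices P_k ∈ T_{m_k}(F) for k ∈ {0, …, n} such that P_{k−1} · D_k · P_k⁻¹ is a rook matrix for every k ∈ {1, …, n}. Moreover, these rook matrices are uniquely determined: P_{k−1} · D_k · P_k⁻¹ equals the rook matrix of D_k for each k, independently of the choice of the P_k. -/

import Mathlib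

/-- A square matrix is unitriangular if it is upper triangular with 1's on the diagonal. -/
def Matrix.IsUnitriangular {n : ℕ} {R : Type*} [Zero R] [One R]
    (A : Matrix (Fin n) (Fin n) R) : Prop :=
  (∀ i, A i i = 1) ∧ ∀ i j : Fin n, j < i → A i j = 0

/-- A matrix is a rook matrix if every row and every column contains
at most one nonzero entry. -/
def Matrix.IsRook {n m : ℕ} {F : Type*} [Zero F]
    (R : Matrix (Fin n) (Fin m) F) : Prop :=
  (∀ i j j', R i j ≠ 0 → R i j' ≠ 0 → j = j') ∧
  (∀ i i' j, R i j ≠ 0 → R i' j ≠ 0 → i = i')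

/-!
Existence: sweep the columns from left to right. In column `t` take the lowest nonzero entry as
pivot, clear the entries above it by adding multiples of the pivot row to higher rows and the
entries to its right by adding multiples of column `t` to later columns; both operations are
unitriangular and leave the earlier pivots alone. The row operations never touch a zero row of
the matrix, and this is what makes the differentials compatible: once `P k * D k * P (k+1)⁻¹` is
a rook matrix `R`, we have `R * (P (k+1) * D (k+1)) = 0`, so every column of `R` containing a
nonzero entry indexes a zero row of `P (k+1) * D (k+1)`. The row operations rookifying the
latter fix those rows, hence leave `R` unchanged.

Uniqueness: if `U * X = Y * W` with `U`, `W` unitriangular and `X`, `Y` rook matrices, the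
`(i, j)` entry of either side involves only `X i j`, `Y i j`, entries of `X` below and entries of
`Y` to the left of `(i, j)`; at a pivot of `X` or of `Y` the rook property kills all of them, so
`X = Y` by induction on `j + (a - i)`.
-/

namespace Matrix

section Zero

variable {R : Type*} [Zero R] {a b : ℕ}

theorem IsRook.apply_eq_zero_of_ne_row {X : Matrix (Fin a) (Fin b) R} (hX : X.IsRook)
    {i k : Fin a} {j : Fin b} (hij : X i j ≠ 0) (hk : k ≠ i) : X k j = 0 :=
  not_not.1 fun hkj => hk (hX.2 k i j hkj hij)

theorem IsRook.apply_eq_zero_of_ne_col {X : Matrix (Fin a) (Fin b) R} (hX : X.IsRook)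
    {i : Fin a} {j l : Fin b} (hij : X i j ≠ 0) (hl : l ≠ j) : X i l = 0 :=
  not_not.1 fun hil => hl (hX.1 i l j hil hij)

def IsRookUpTo (t : ℕ) (N : Matrix (Fin a) (Fin b) R) : Prop :=
  ∀ (i : Fin a) (j : Fin b), (j : ℕ) < t → N i j ≠ 0 →
    (∀ j', N i j' ≠ 0 → j' = j) ∧ ∀ i', N i' j ≠ 0 → i' = i

theorem isRookUpTo_zero (N : Matrix (Fin a) (Fin b) R) : N.IsRookUpTo 0 :=
  fun _ _ h => absurd h (Nat.not_lt_zero _)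

theorem IsRookUpTo.isRook {N : Matrix (Fin a) (Fin b) R} (hN : N.IsRookUpTo b) : N.IsRook :=
  ⟨fun i j j' hj hj' => ((hN i j j.isLt hj).1 j' hj').symm,
    fun i i' j hi hi' => ((hN i j j.isLt hi).2 i' hi').symm⟩

theorem IsRookUpTo.succ_of_col_eq_zero {N : Matrix (Fin a) (Fin b) R} {t : Fin b}
    (hN : N.IsRookUpTo t) (ht : ∀ i, N i t = 0) : N.IsRookUpTo (t + 1) := by
  intro i j hj hij
  rcases Nat.lt_succ_iff_lt_or_eq.1 hj with hj | hj
  · exact hN i j hj hij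
  · exact absurd (ht i) (Fin.ext hj ▸ hij)

theorem IsRookUpTo.succ_of_isolated_pivot {N N' : Matrix (Fin a) (Fin b) R} {t : Fin b}
    {k : Fin a} (hN : N.IsRookUpTo t) (hrow : ∀ j, N' k j ≠ 0 → j = t)
    (hcol : ∀ i, i ≠ k → N' i t = 0)
    (hleft : ∀ i, i ≠ k → ∀ j : Fin b, (j : ℕ) < t → N' i j = N i j)
    (hkeep : ∀ i, i ≠ k → N i t = 0 → N' i = N i) : N'.IsRookUpTo (t + 1) := by
  intro i j hj hij
  by_cases hik : i = k
  · subst hik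
    obtain rfl := hrow j hij
    exact ⟨hrow, fun i' hi' => not_not.1 fun h => hi' (hcol i' h)⟩
  have hjt : j ≠ t := fun h => hij (h ▸ hcol i hik)
  have hjt' : (j : ℕ) < t := by omega
  obtain ⟨hrowN, hcolN⟩ := hN i j hjt' (by rwa [hleft i hik j hjt'] at hij)
  have hi := hkeep i hik (not_not.1 fun h => hjt (hrowN t h).symm)
  refine ⟨fun j' hj' => hrowN j' (hi ▸ hj'), fun i' hi' => hcolN i' ?_⟩
  have hi'k : i' ≠ k := fun h => hjt (hrow j (h ▸ hi'))
  rwa [hleft i' hi'k j hjt'] at hi'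

end Zero

section Semiring

variable {R : Type*} [Semiring R] {a b : ℕ}

theorem mul_apply_eq_single {l m n : Type*} [Fintype m] {A : Matrix l m R} {B : Matrix m n R}
    {i : l} {j : n} (k : m) (h : ∀ k' ≠ k, A i k' * B k' j = 0) :
    (A * B) i j = A i k * B k j :=
  Finset.sum_eq_single k (fun k' _ hk' => h k' hk') (by simp)

theorem mul_row_eq_of_row_eq_one {l n : Type*} [Fintype l] [DecidableEq l]
    {A : Matrix l l R} {i : l} (hi : A i = (1 : Matrix l l R) i) (X : Matrix l n R) :
    (A * X) i = X i := by
  funext j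
  rw [mul_apply, hi, ← mul_apply, Matrix.one_mul]

theorem mul_row_eq_zero {l m n : Type*} [Fintype m] {X : Matrix l m R} {i : l} (hi : X i = 0)
    (Y : Matrix m n R) : (X * Y) i = 0 := by
  funext j
  simp [mul_apply, hi]

theorem IsUpperTriangular.mul_apply_self {m : Type*} [Fintype m] [LinearOrder m]
    {A B : Matrix m m R} (hA : A.IsUpperTriangular) (hB : B.IsUpperTriangular) (i : m) :
    (A * B) i i = A i i * B i i :=
  mul_apply_eq_single i fun k hk => by
    rcases hk.lt_or_gt with hk | hk
    · rw [hA hk, zero_mul]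
    · rw [hB hk, mul_zero]

theorem IsUnitriangular.isUpperTriangular {A : Matrix (Fin a) (Fin a) R}
    (hA : A.IsUnitriangular) : A.IsUpperTriangular :=
  fun i j h => hA.2 i j h

theorem isUnitriangular_one : (1 : Matrix (Fin a) (Fin a) R).IsUnitriangular :=
  ⟨fun _ => one_apply_eq _, fun _ _ h => one_apply_ne h.ne'⟩

theorem IsUnitriangular.mul {A B : Matrix (Fin a) (Fin a) R} (hA : A.IsUnitriangular)
    (hB : B.IsUnitriangular) : (A * B).IsUnitriangular :=
  ⟨fun i => by rw [hA.isUpperTriangular.mul_apply_self hB.isUpperTriangular, hA.1, hB.1, one_mul],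
    fun _ _ h => hA.isUpperTriangular.mul hB.isUpperTriangular h⟩

theorem isUnitriangular_one_add {N : Matrix (Fin a) (Fin a) R} (hN : ∀ i j, j ≤ i → N i j = 0) :
    (1 + N).IsUnitriangular :=
  ⟨fun i => by simp [hN i i le_rfl], fun i j h => by simp [hN i j h.le, one_apply_ne h.ne']⟩

theorem isUnitriangular_one_add_vecMulVec_single {u : Fin a → R} {k : Fin a}
    (hu : ∀ i, k ≤ i → u i = 0) :
    (1 + vecMulVec u (Pi.single k 1) : Matrix (Fin a) (Fin a) R).IsUnitriangular := by
  refine isUnitriangular_one_add fun i j hji => ?_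
  rw [vecMulVec_apply]
  by_cases hj : j = k
  · rw [hu i (hj ▸ hji), zero_mul]
  · rw [Pi.single_eq_of_ne hj, mul_zero]

theorem isUnitriangular_one_add_single_vecMulVec {w : Fin a → R} {t : Fin a}
    (hw : ∀ j, j ≤ t → w j = 0) :
    (1 + vecMulVec (Pi.single t 1) w : Matrix (Fin a) (Fin a) R).IsUnitriangular := by
  refine isUnitriangular_one_add fun i j hji => ?_
  rw [vecMulVec_apply]
  by_cases hi : i = t
  · rw [hw j (hi ▸ hji), mul_zero]
  · rw [Pi.single_eq_of_ne hi, zero_mul]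

theorem one_add_vecMulVec_mul_mul_one_add_vecMulVec_apply {l m : Type*} [Fintype l]
    [Fintype m] [DecidableEq l] [DecidableEq m] (N : Matrix l m R) (u : l → R) (w : m → R)
    (k : l) (t : m) (i : l) (j : m) :
    ((1 + vecMulVec u (Pi.single k 1) : Matrix l l R) * N *
      (1 + vecMulVec (Pi.single t 1) w : Matrix m m R)) i j =
      N i j + u i * N k j + (N i t + u i * N k t) * w j := by
  simp [Matrix.add_mul, Matrix.mul_add, vecMulVec_mul, mul_vecMulVec, vecMulVec_apply]

theorem IsRook.eq_of_mul_eq_mul {X Y : Matrix (Fin a) (Fin b) R} {U : Matrix (Fin a) (Fin a) R}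
    {W : Matrix (Fin b) (Fin b) R} (hX : X.IsRook) (hY : Y.IsRook) (hU : U.IsUnitriangular)
    (hW : W.IsUnitriangular) (h : U * X = Y * W) : X = Y := by
  suffices ∀ d, ∀ (i : Fin a) (j : Fin b), (j : ℕ) + (a - i) = d → X i j = Y i j from
    ext fun i j => this _ i j rfl
  intro d
  induction d using Nat.strong_induction_on with
  | _ d ih =>
  rintro i j rfl
  have hij : (U * X) i j = (Y * W) i j := by rw [h]
  have hXbelow : ∀ k, i < k → X k j = Y k j := fun k hk => ih _ (by have := k.isLt; omega) k j rfl
  have hYleft : ∀ l, l < j → X i l = Y i l := fun l hl => ih _ (by omega) i l rfl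
  by_cases hXij : X i j ≠ 0
  · rw [mul_apply_eq_single i fun k hk => by rw [hX.apply_eq_zero_of_ne_row hXij hk, mul_zero],
      hU.1, one_mul, mul_apply_eq_single j fun l hl => ?_, hW.1, mul_one] at hij
    · exact hij
    rcases hl.lt_or_gt with hl' | hl'
    · rw [← hYleft l hl', hX.apply_eq_zero_of_ne_col hXij hl, zero_mul]
    · rw [hW.2 l j hl', mul_zero]
  by_cases hYij : Y i j ≠ 0
  · rw [mul_apply_eq_single j fun l hl => by rw [hY.apply_eq_zero_of_ne_col hYij hl, zero_mul],
      hW.1, mul_one, mul_apply_eq_single i fun k hk => ?_, hU.1, one_mul] at hij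
    · exact hij
    rcases hk.lt_or_gt with hk' | hk'
    · rw [hU.2 i k hk', zero_mul]
    · rw [hXbelow k hk', hY.apply_eq_zero_of_ne_row hYij hk, mul_zero]
  rw [not_not.1 hXij, not_not.1 hYij]

theorem IsRook.mul_eq_self_of_mul_eq_zero [NoZeroDivisors R] {c : ℕ}
    {X : Matrix (Fin c) (Fin a) R} {M : Matrix (Fin a) (Fin b) R} {A : Matrix (Fin a) (Fin a) R}
    (hX : X.IsRook) (hXM : X * M = 0) (hA : ∀ l, M l = 0 → A l = (1 : Matrix _ _ R) l) :
    X * A = X := by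
  ext i j
  have hM : ∀ l, X i l ≠ 0 → M l = 0 := fun l hl => funext fun q => by
    have hiq : (X * M) i q = 0 := by rw [hXM, zero_apply]
    rw [mul_apply_eq_single l fun l' hl' => by rw [hX.apply_eq_zero_of_ne_col hl hl', zero_mul]]
      at hiq
    exact (mul_eq_zero.1 hiq).resolve_left hl
  calc (X * A) i j = (X * (1 : Matrix (Fin a) (Fin a) R)) i j := by
        rw [mul_apply, mul_apply]
        refine Finset.sum_congr rfl fun l _ => ?_
        by_cases hl : X i l = 0
        · rw [hl, zero_mul, zero_mul]
        · rw [hA l (hM l hl)]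
    _ = X i j := by rw [Matrix.mul_one]

end Semiring

section CommRing

variable {R : Type*} [CommRing R] {a b : ℕ}

theorem IsUnitriangular.det_eq_one {A : Matrix (Fin a) (Fin a) R} (hA : A.IsUnitriangular) :
    A.det = 1 := by
  simp [det_of_isUpperTriangular hA.isUpperTriangular, hA.1]

theorem IsUnitriangular.isUnit_det {A : Matrix (Fin a) (Fin a) R} (hA : A.IsUnitriangular) :
    IsUnit A.det := by
  rw [hA.det_eq_one]
  exact isUnit_one

theorem IsUnitriangular.inv {A : Matrix (Fin a) (Fin a) R} (hA : A.IsUnitriangular) :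
    A⁻¹.IsUnitriangular := by
  have := A.invertibleOfIsUnitDet hA.isUnit_det
  have hinv : A⁻¹.IsUpperTriangular := blockTriangular_inv_of_blockTriangular hA.isUpperTriangular
  refine ⟨fun i => ?_, fun i j h => hinv h⟩
  have hii := congrFun (congrFun (nonsing_inv_mul A hA.isUnit_det) i) i
  rwa [hinv.mul_apply_self hA.isUpperTriangular, hA.1, mul_one, one_apply_eq] at hii

theorem IsRook.unitriangular_mul_mul_eq {M : Matrix (Fin a) (Fin b) R}
    {A A' : Matrix (Fin a) (Fin a) R} {B B' : Matrix (Fin b) (Fin b) R} (hA : A.IsUnitriangular)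
    (hB : B.IsUnitriangular) (hA' : A'.IsUnitriangular) (hB' : B'.IsUnitriangular)
    (h : (A * M * B).IsRook) (h' : (A' * M * B').IsRook) : A * M * B = A' * M * B' := by
  refine h.eq_of_mul_eq_mul h' (hA'.mul hA.inv) (hB'.inv.mul hB) ?_
  simp only [Matrix.mul_assoc, nonsing_inv_mul_cancel_left _ _ hA.isUnit_det,
    mul_nonsing_inv_cancel_left _ _ hB'.isUnit_det]

theorem IsRook.mul_inv_eq_self_of_mul_eq_zero [NoZeroDivisors R] {c : ℕ}
    {X : Matrix (Fin c) (Fin a) R} {M : Matrix (Fin a) (Fin b) R} {A : Matrix (Fin a) (Fin a) R}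
    (hX : X.IsRook) (hXM : X * M = 0) (hA : A.IsUnitriangular)
    (hArow : ∀ l, M l = 0 → A l = (1 : Matrix _ _ R) l) : X * A⁻¹ = X :=
  calc X * A⁻¹ = X * A * A⁻¹ := by rw [hX.mul_eq_self_of_mul_eq_zero hXM hArow]
    _ = X := mul_nonsing_inv_cancel_right _ _ hA.isUnit_det

end CommRing

section Field

variable {F : Type*} [Field F] {a b : ℕ}

theorem IsRookUpTo.exists_succ_of_pivot {N : Matrix (Fin a) (Fin b) F} {t : Fin b} {k : Fin a}
    (hN : N.IsRookUpTo t) (hk : N k t ≠ 0) (hbelow : ∀ i, k < i → N i t = 0) :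
    ∃ E : Matrix (Fin a) (Fin a) F, ∃ G : Matrix (Fin b) (Fin b) F,
      E.IsUnitriangular ∧ G.IsUnitriangular ∧ (∀ l, N l = 0 → E l = (1 : Matrix _ _ F) l) ∧
      (E * N * G).IsRookUpTo (t + 1) := by
  let u : Fin a → F := fun i => if i = k then 0 else -(N i t / N k t)
  let w : Fin b → F := fun j => if j = t then 0 else -(N k j / N k t)
  let E : Matrix (Fin a) (Fin a) F := 1 + vecMulVec u (Pi.single k 1)
  let G : Matrix (Fin b) (Fin b) F := 1 + vecMulVec (Pi.single t 1) w
  have hu : ∀ i, N i t = 0 → u i = 0 := fun i hi => by simp [u, hi]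
  have hrowk : ∀ j : Fin b, (j : ℕ) < t → N k j = 0 := fun j hj => not_not.1 fun h =>
    (Fin.ne_of_gt hj) ((hN k j hj h).1 t hk)
  have hentry : ∀ i j, (E * N * G) i j = N i j + u i * N k j + (N i t + u i * N k t) * w j :=
    one_add_vecMulVec_mul_mul_one_add_vecMulVec_apply N u w k t
  have hcancel : ∀ i, i ≠ k → N i t + u i * N k t = 0 := fun i hi => by
    simp [u, hi, div_mul_cancel₀ _ hk]
  have hother : ∀ i, i ≠ k → ∀ j, (E * N * G) i j = N i j + u i * N k j := fun i hi j => by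
    rw [hentry, hcancel i hi, zero_mul, add_zero]
  refine ⟨E, G, isUnitriangular_one_add_vecMulVec_single fun i hki => ?_,
    isUnitriangular_one_add_single_vecMulVec fun j hjt => ?_, fun l hl => ?_,
    hN.succ_of_isolated_pivot (k := k) (fun j hj => ?_) (fun i hi => ?_)
      (fun i hi j hj => ?_) (fun i hi hit => ?_)⟩
  · rcases hki.eq_or_lt with rfl | hlt
    · simp [u]
    · exact hu i (hbelow i hlt)
  · rcases hjt.eq_or_lt with rfl | hlt
    · simp [w]
    · simp [w, hlt.ne, hrowk j hlt]
  · funext j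
    simp [E, vecMulVec_apply, hu l (congrFun hl t)]
  · by_contra hjt
    apply hj
    rw [hentry]
    simp [u, w, hjt, mul_div_cancel₀ _ hk]
  · rw [hentry, hcancel i hi]
    simp [w]
  · rw [hother i hi, hrowk j hj, mul_zero, add_zero]
  · funext j
    rw [hother i hi, hu i hit, zero_mul, add_zero]

theorem IsRookUpTo.exists_succ {N : Matrix (Fin a) (Fin b) F} {t : Fin b} (hN : N.IsRookUpTo t) :
    ∃ E : Matrix (Fin a) (Fin a) F, ∃ G : Matrix (Fin b) (Fin b) F,
      E.IsUnitriangular ∧ G.IsUnitriangular ∧ (∀ l, N l = 0 → E l = (1 : Matrix _ _ F) l) ∧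
      (E * N * G).IsRookUpTo (t + 1) := by
  classical
  by_cases! hcol : ∀ i, N i t = 0
  · exact ⟨1, 1, isUnitriangular_one, isUnitriangular_one, fun _ _ => rfl,
      by simpa using hN.succ_of_col_eq_zero hcol⟩
  obtain ⟨k, hk, hmax⟩ := Finset.exists_max_image {i | N i t ≠ 0} id
    (by simpa [Finset.Nonempty] using hcol)
  exact hN.exists_succ_of_pivot (by simpa using hk) fun i hi => not_not.1 fun h =>
    (hmax i (by simpa using h)).not_gt hi

theorem exists_isRook_unitriangular_mul_mul (M : Matrix (Fin a) (Fin b) F) :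
    ∃ A : Matrix (Fin a) (Fin a) F, ∃ B : Matrix (Fin b) (Fin b) F,
      A.IsUnitriangular ∧ B.IsUnitriangular ∧ (A * M * B).IsRook ∧
      ∀ l, M l = 0 → A l = (1 : Matrix _ _ F) l := by
  suffices ∀ t ≤ b, ∃ A : Matrix (Fin a) (Fin a) F, ∃ B : Matrix (Fin b) (Fin b) F,
      A.IsUnitriangular ∧ B.IsUnitriangular ∧ (A * M * B).IsRookUpTo t ∧
      ∀ l, M l = 0 → A l = (1 : Matrix _ _ F) l by
    obtain ⟨A, B, hA, hB, hAMB, hrow⟩ := this b le_rfl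
    exact ⟨A, B, hA, hB, hAMB.isRook, hrow⟩
  intro t
  induction t with
  | zero => exact fun _ => ⟨1, 1, isUnitriangular_one, isUnitriangular_one,
      isRookUpTo_zero _, fun _ _ => rfl⟩
  | succ t ih =>
    intro ht
    obtain ⟨A, B, hA, hB, hAMB, hrow⟩ := ih (by omega)
    obtain ⟨E, G, hE, hG, hErow, hEAMBG⟩ := hAMB.exists_succ (t := ⟨t, ht⟩)
    refine ⟨E * A, B * G, hE.mul hA, hB.mul hG, ?_, fun l hl => ?_⟩
    · simpa [Matrix.mul_assoc] using hEAMBG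
    · have hAl := hrow l hl
      have hEl := hErow l (mul_row_eq_zero (by rw [mul_row_eq_of_row_eq_one hAl, hl]) B)
      rw [mul_row_eq_of_row_eq_one hEl, hAl]

theorem exists_unitriangular_isRook_mul_mul_inv (m : ℕ → ℕ)
    (D : ∀ k, Matrix (Fin (m k)) (Fin (m (k + 1))) F) (n : ℕ)
    (hD : ∀ k, k + 1 < n → D k * D (k + 1) = 0) :
    ∃ P : ∀ k, Matrix (Fin (m k)) (Fin (m k)) F,
      (∀ k, (P k).IsUnitriangular) ∧ ∀ k < n, (P k * D k * (P (k + 1))⁻¹).IsRook := by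
  induction n with
  | zero =>
    exact ⟨fun _ => 1, fun _ => isUnitriangular_one, fun _ h => absurd h (Nat.not_lt_zero _)⟩
  | succ n ih =>
    obtain ⟨P, hP, hrook⟩ := ih fun k hk => hD k (by omega)
    obtain ⟨A, B, hA, hB, hAPDB, hArow⟩ := exists_isRook_unitriangular_mul_mul (P n * D n)
    classical
    let P' := Function.update (Function.update P n (A * P n)) (n + 1) B⁻¹
    have hP'n : P' n = A * P n := by simp [P']
    have hP'succ : P' (n + 1) = B⁻¹ := by simp [P']
    have hP'ne : ∀ k, k ≠ n → k ≠ n + 1 → P' k = P k := fun k h1 h2 => by simp [P', h1, h2]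
    refine ⟨P', fun k => ?_, fun k hk => ?_⟩
    · by_cases h1 : k = n
      · rw [h1, hP'n]
        exact hA.mul (hP n)
      by_cases h2 : k = n + 1
      · rw [h2, hP'succ]
        exact hB.inv
      rw [hP'ne k h1 h2]
      exact hP k
    by_cases h1 : k = n
    · subst h1
      rw [hP'n, hP'succ, nonsing_inv_nonsing_inv _ hB.isUnit_det]
      simpa [Matrix.mul_assoc] using hAPDB
    have hR := hrook k (by omega)
    by_cases h2 : k + 1 = n
    · subst h2
      rw [hP'ne k (by omega) (by omega), hP'n, mul_inv_rev, ← Matrix.mul_assoc,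
        hR.mul_inv_eq_self_of_mul_eq_zero (M := P (k + 1) * D (k + 1)) ?_ hA hArow]
      · exact hR
      rw [Matrix.mul_assoc, nonsing_inv_mul_cancel_left _ _ (hP (k + 1)).isUnit_det,
        Matrix.mul_assoc, hD k (by omega), Matrix.mul_zero]
    rw [hP'ne k h1 (by omega), hP'ne (k + 1) h2 (by omega)]
    exact hR

end Field

end Matrix

theorem classification_of_enhanced_complexes_general {F : Type*} [Field F]
    {n : ℕ} (m : ℕ → ℕ)
    (D : ∀ k : ℕ, Matrix (Fin (m k)) (Fin (m (k + 1))) F)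
    (hD : ∀ k, k + 1 < n → D k * D (k + 1) = 0) :
    ∃ P : ∀ k : ℕ, Matrix (Fin (m k)) (Fin (m k)) F,
      (∀ k, k ≤ n → (P k).IsUnitriangular) ∧
      (∀ k, k < n → (P k * D k * (P (k + 1))⁻¹).IsRook) ∧
      ∀ Q : ∀ k : ℕ, Matrix (Fin (m k)) (Fin (m k)) F,
        (∀ k, k ≤ n → (Q k).IsUnitriangular) →
        (∀ k, k < n → (Q k * D k * (Q (k + 1))⁻¹).IsRook) →
        ∀ k, k < n → Q k * D k * (Q (k + 1))⁻¹ = P k * D k * (P (k + 1))⁻¹ := by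
  obtain ⟨P, hP, hProok⟩ := Matrix.exists_unitriangular_isRook_mul_mul_inv m D n hD
  refine ⟨P, fun k _ => hP k, hProok, fun Q hQ hQrook k hk => ?_⟩
  exact Matrix.IsRook.unitriangular_mul_mul_eq (hQ k hk.le) (hQ (k + 1) hk).inv (hP k)
    (hP (k + 1)).inv (hQrook k hk) (hProok k hk)

/-- Classification of enhanced complexes, matrix form. The differentials `D k`
(of size `m k × m (k+1)`, indexed here by `k = 0, …, n-1`, with `D k * D (k+1) = 0`)
can be simultaneously put in rook form by unitriangular base changes
`P k ∈ T_{m k}(F)`, `k = 0, …, n`; and the resulting rook matrices are uniquely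
determined, independently of the choice of the `P k`. -/
theorem classification_of_enhanced_complexes {F : Type*} [Field F]
    {n : ℕ} (hn : 1 ≤ n) (m : ℕ → ℕ)
    (D : ∀ k : ℕ, Matrix (Fin (m k)) (Fin (m (k + 1))) F)
    (hD : ∀ k, k + 1 < n → D k * D (k + 1) = 0) :
    ∃ P : ∀ k : ℕ, Matrix (Fin (m k)) (Fin (m k)) F,
      (∀ k, k ≤ n → (P k).IsUnitriangular) ∧
      (∀ k, k < n → (P k * D k * (P (k + 1))⁻¹).IsRook) ∧
      ∀ Q : ∀ k : ℕ, Matrix (Fin (m k)) (Fin (m k)) F,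
        (∀ k, k ≤ n → (Q k).IsUnitriangular) →
        (∀ k, k < n → (Q k * D k * (Q (k + 1))⁻¹).IsRook) →
        ∀ k, k < n → Q k * D k * (Q (k + 1))⁻¹ = P k * D k * (P (k + 1))⁻¹ :=
  classification_of_enhanced_complexes_general m D hD
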